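/- Let X and Y be disjoint finite sets of variables with finite nonempty domains, and let C ⊆ D^X × D^Y be a relation. Let x, y be fresh variables sharing a common domain E with |E| ≥ 2. Consider the 2-player zero-sum CSG in which player 1 controls the variables X ∪ {x}, player 2 controls Y ∪ {y}, and player 1's goal is the set of profiles satisfying 'C holds or x = y' (player 2's goal its complement). Then this game has a pure Nash equilibrium if and only if the formula ∃s_1 ∈ D^X, ∀s_2 ∈ D^Y, (s_1, s_2) ∈ C is true. -/
import Mathlib

/-- The 2-player zero-sum CSG built from a relation `C ⊆ D^X × D^Y` with
fresh variables `x, y` over a common domain `E` of size ≥ 2 (player 1's goal: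
`C holds or x = y`) has a pure Nash equilibrium iff `∃ s₁, ∀ s₂, (s₁, s₂) ∈ C`. -/
theorem qcsp_reduction_pne_iff
    {A B E : Type*} [Fintype A] [Fintype B] [Fintype E]
    [Nonempty A] [Nonempty B] [Nonempty E]
    (hE : 2 ≤ Fintype.card E)
    (C : Set (A × B))
    (Sol : Set ((A × E) × (B × E)))
    (hSol : ∀ p : (A × E) × (B × E), p ∈ Sol ↔ ((p.1.1, p.2.1) ∈ C ∨ p.1.2 = p.2.2)) :
    (∃ p : (A × E) × (B × E),
        ¬ (p ∉ Sol ∧ ∃ q₁ : A × E, (q₁, p.2) ∈ Sol) ∧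
        ¬ (p ∈ Sol ∧ ∃ q₂ : B × E, (p.1, q₂) ∉ Sol)) ↔
      (∃ s₁ : A, ∀ s₂ : B, (s₁, s₂) ∈ C) := by
  constructor
  · rintro ⟨p, h1, h2⟩
    have hp : p ∈ Sol := by
      by_contra hns
      exact h1 ⟨hns, ⟨(p.1.1, p.2.2), (hSol _).2 (Or.inr rfl)⟩⟩
    refine ⟨p.1.1, fun s₂ => ?_⟩
    obtain ⟨w, hw⟩ := Fintype.exists_ne_of_one_lt_card hE p.1.2
    by_contra hc
    exact h2 ⟨hp, ⟨(s₂, w), fun h => by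
      rcases (hSol _).1 h with h | h
      · exact hc h
      · exact hw h.symm⟩⟩
  · rintro ⟨s₁, hs⟩
    obtain ⟨e⟩ := (inferInstance : Nonempty E)
    obtain ⟨b⟩ := (inferInstance : Nonempty B)
    refine ⟨((s₁, e), (b, e)), fun h => h.1 ((hSol _).2 (Or.inl (hs b))), fun h => ?_⟩
    obtain ⟨q₂, hq⟩ := h.2
    exact hq ((hSol _).2 (Or.inl (hs q₂.1)))
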